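/- arXiv:2505.17288 — 2 statements merged into one kernel-verified Lean document; each statement's English description precedes it below -/
import Mathlib

section
/- Let R_F be the class of 0-1 rewards r_f(x,y) = 1{y = f^AR(x)} induced by a binary class F of next-token predictors with finite VC dimension. Then VC(R_F) ≤ c · log(T) · VC(F) for a universal constant c. -/
/-- Autoregressive unrolling of a next-token predictor. -/
def arList (f : List Bool → Bool) (x : List Bool) : ℕ → List Bool
  | 0 => []
  | T + 1 => arList f x T ++ [f (x ++ arList f x T)]

/-- `H` shatters the points `xs`. -/
def Shatters {α : Type*} (H : Set (α → Bool)) {n : ℕ} (xs : Fin n → α) : Prop :=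
  ∀ v : Fin n → Bool, ∃ h ∈ H, ∀ i, h (xs i) = v i

/-- The VC dimension of `H` is at most `d : ℕ`. -/
def VCdimLe {α : Type*} (H : Set (α → Bool)) (d : ℕ) : Prop :=
  ∀ n (xs : Fin n → α), Shatters H xs → n ≤ d

/-- The class of 0-1 rewards `r_f(x,y) = 1{y = f^AR(x)}` induced by `F`. -/
def rewardClass01 (F : Set (List Bool → Bool)) (T : ℕ) :
    Set (List Bool × List Bool → Bool) :=
  {g | ∃ f ∈ F, g = fun p => decide (p.2 = arList f p.1 T)}

/-!
The reward `r_f(x, y)` only depends on the values of `f` at the `T` prefixes `x ++ y.take t`,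
`t < T`. So if `R_F` shatters `m` pairs, then `F` has at least `2 ^ m` distinct traces on a
set of `m * T` points, and the Sauer–Shelah lemma gives
`2 ^ m ≤ ∑_{k ≤ d} (m T choose k) ≤ (e m T / d) ^ d`. Taking logarithms and using
`log u ≤ u / e` for `u = m / d` yields `m ≤ 8 d log T`.
-/

open scoped Finset

section Unrolling

variable (f g : List Bool → Bool) (x : List Bool)

lemma arList_length (T : ℕ) : (arList f x T).length = T := by
  induction T with
  | zero => rfl
  | succ T ih => simp [arList, ih]

lemma arList_prefix {t T : ℕ} (h : t ≤ T) : arList f x t <+: arList f x T := by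
  induction T, h using Nat.le_induction with
  | base => exact List.prefix_refl _
  | succ T _ ih => exact ih.trans (List.prefix_append _ _)

lemma take_arList {t T : ℕ} (h : t ≤ T) : (arList f x T).take t = arList f x t := by
  conv_lhs => rw [← arList_length f x t]
  exact (List.prefix_iff_eq_take.1 (arList_prefix f x h)).symm

variable {f g x}

lemma arList_congr {T : ℕ} (h : ∀ t < T, f (x ++ arList f x t) = g (x ++ arList f x t)) :
    arList f x T = arList g x T := by
  induction T with
  | zero => rfl
  | succ T ih =>
    have hT : arList f x T = arList g x T := ih fun t ht => h t (by omega)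
    rw [arList, arList, h T T.lt_succ_self, hT]

lemma eq_arList_iff_of_forall_take {y : List Bool} {T : ℕ}
    (h : ∀ t < T, f (x ++ y.take t) = g (x ++ y.take t)) :
    y = arList f x T ↔ y = arList g x T := by
  suffices key : ∀ f g : List Bool → Bool, (∀ t < T, f (x ++ y.take t) = g (x ++ y.take t)) →
      y = arList f x T → y = arList g x T from
    ⟨key f g h, key g f fun t ht => (h t ht).symm⟩
  rintro f g h rfl
  refine arList_congr fun t ht => ?_
  rw [← take_arList f x ht.le]
  exact h t ht

end Unrolling

section SauerShelah

variable {α ι : Type*} [Fintype ι]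

open Classical in
noncomputable def traceFamily (H : Set (α → Bool)) (p : ι → α) : Finset (Finset ι) :=
  Finset.univ.filter fun s => ∃ h ∈ H, ∀ i, h (p i) = true ↔ i ∈ s

variable {H : Set (α → Bool)} {p : ι → α}

lemma mem_traceFamily {s : Finset ι} :
    s ∈ traceFamily H p ↔ ∃ h ∈ H, ∀ i, h (p i) = true ↔ i ∈ s := by
  simp [traceFamily]

lemma ncard_image_comp_le_card_traceFamily :
    ((· ∘ p) '' H).ncard ≤ #(traceFamily H p) := by
  classical
  rw [← Set.ncard_coe_finset]
  refine Set.ncard_le_ncard_of_injOn (fun v => Finset.univ.filter (v · = true)) ?_ ?_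
  · rintro _ ⟨h, hH, rfl⟩
    exact mem_traceFamily.2 ⟨h, hH, by simp⟩
  · intro v _ w _ hvw
    funext i
    simpa using congrArg (i ∈ ·) hvw

lemma card_le_of_shatters_traceFamily [DecidableEq ι] {d : ℕ} (hH : VCdimLe H d) {s : Finset ι}
    (hs : (traceFamily H p).Shatters s) : #s ≤ d := by
  let e : Fin #s → ι := fun j => s.equivFin.symm j
  have he : Function.Injective e := fun i j hij => s.equivFin.symm.injective (Subtype.ext hij)
  refine hH _ (p ∘ e) fun v => ?_
  obtain ⟨u, hu, hsu⟩ :=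
    hs (t := (Finset.univ.filter (v · = true)).map ⟨e, he⟩) fun _ hi => by
      obtain ⟨j, -, rfl⟩ := Finset.mem_map.1 hi
      exact (s.equivFin.symm j).2
  obtain ⟨h, hhH, hhu⟩ := mem_traceFamily.1 hu
  refine ⟨h, hhH, fun j => Bool.eq_iff_iff.2 ?_⟩
  have hj : e j ∈ s ∩ u ↔ v j = true := by simp [hsu]
  rw [Function.comp_apply, hhu, ← hj, Finset.mem_inter, and_iff_right (s.equivFin.symm j).2]

lemma vcDim_traceFamily_le [DecidableEq ι] {d : ℕ} (hH : VCdimLe H d) : (traceFamily H p).vcDim ≤ d :=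
  Finset.sup_le fun _ hs => card_le_of_shatters_traceFamily hH (Finset.mem_shatterer.1 hs)

theorem ncard_image_comp_le_sum_choose {d : ℕ} (hH : VCdimLe H d) (p : ι → α) :
    ((· ∘ p) '' H).ncard ≤ ∑ k ∈ Finset.Iic d, (Fintype.card ι).choose k := by
  classical
  calc ((· ∘ p) '' H).ncard
    _ ≤ #(traceFamily H p) := ncard_image_comp_le_card_traceFamily
    _ ≤ #(traceFamily H p).shatterer := Finset.card_le_card_shatterer _
    _ ≤ ∑ k ∈ Finset.Iic (traceFamily H p).vcDim, (Fintype.card ι).choose k :=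
      Finset.card_shatterer_le_sum_vcDim
    _ ≤ ∑ k ∈ Finset.Iic d, (Fintype.card ι).choose k :=
      Finset.sum_le_sum_of_subset (Finset.Iic_subset_Iic.2 (vcDim_traceFamily_le hH))

end SauerShelah

def prefixQueries {m : ℕ} (zs : Fin m → List Bool × List Bool) (T : ℕ) :
    Fin m × Fin T → List Bool :=
  fun q => (zs q.1).1 ++ (zs q.1).2.take q.2

lemma two_pow_le_ncard_traces_prefixQueries {F : Set (List Bool → Bool)} {T m : ℕ}
    {zs : Fin m → List Bool × List Bool} (hsh : Shatters (rewardClass01 F T) zs) :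
    2 ^ m ≤ ((· ∘ prefixQueries zs T) '' F).ncard := by
  have hrealize : ∀ v : Fin m → Bool, ∃ f ∈ F,
      ∀ i, decide ((zs i).2 = arList f (zs i).1 T) = v i := by
    intro v
    obtain ⟨_, ⟨f, hf, rfl⟩, hv⟩ := hsh v
    exact ⟨f, hf, hv⟩
  choose f hfF hf using hrealize
  calc 2 ^ m = (Set.univ : Set (Fin m → Bool)).ncard := by simp [Set.ncard_univ]
    _ ≤ _ := by
      refine Set.ncard_le_ncard_of_injOn (f · ∘ prefixQueries zs T)
        (fun v _ => ⟨f v, hfF v, rfl⟩) (fun v _ w _ hvw => funext fun i => ?_)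
      rw [← hf v i, ← hf w i]
      exact decide_eq_decide.2
        (eq_arList_iff_of_forall_take fun t ht => congrFun hvw (i, ⟨t, ht⟩))

lemma Real.log_le_div_exp_one {u : ℝ} (hu : 0 < u) : Real.log u ≤ u / Real.exp 1 := by
  have := Real.log_le_sub_one_of_pos (div_pos hu (Real.exp_pos 1))
  rw [Real.log_div hu.ne' (Real.exp_pos 1).ne', Real.log_exp] at this
  linarith

lemma sum_Iic_choose_le_exp_mul_div_pow {n d : ℕ} (hdn : d ≤ n) :
    ∑ k ∈ Finset.Iic d, (n.choose k : ℝ) ≤ (Real.exp 1 * n / d) ^ d := by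
  rcases d.eq_zero_or_pos with rfl | hd
  · simp [← Nat.range_succ_eq_Iic]
  have hn : (0 : ℝ) < n := by exact_mod_cast hd.trans_le hdn
  set r : ℝ := d / n with hr
  have hr0 : 0 < r := by positivity
  have hr1 : r ≤ 1 := div_le_one_of_le₀ (by exact_mod_cast hdn) hn.le
  have key : (∑ k ∈ Finset.Iic d, (n.choose k : ℝ)) * r ^ d ≤ Real.exp d :=
    calc (∑ k ∈ Finset.Iic d, (n.choose k : ℝ)) * r ^ d
      _ ≤ ∑ k ∈ Finset.Iic d, (n.choose k : ℝ) * r ^ k := by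
        rw [Finset.sum_mul]
        refine Finset.sum_le_sum fun k hk => mul_le_mul_of_nonneg_left ?_ (by positivity)
        exact pow_le_pow_of_le_one hr0.le hr1 (Finset.mem_Iic.1 hk)
      _ ≤ ∑ k ∈ Finset.range (n + 1), (n.choose k : ℝ) * r ^ k := by
        refine Finset.sum_le_sum_of_subset_of_nonneg (fun k hk => ?_) fun _ _ _ => by positivity
        simp only [Finset.mem_Iic, Finset.mem_range] at hk ⊢
        omega
      _ = (1 + r) ^ n := by
        rw [add_comm 1 r, add_pow]
        simp only [one_pow, mul_one, mul_comm]
      _ ≤ Real.exp r ^ n := by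
        gcongr
        linarith [Real.add_one_le_exp r]
      _ = Real.exp d := by
        rw [← Real.exp_nat_mul, hr, mul_div_cancel₀ _ hn.ne']
  calc ∑ k ∈ Finset.Iic d, (n.choose k : ℝ)
    _ ≤ Real.exp d / r ^ d := (le_div_iff₀ (by positivity)).2 key
    _ = (Real.exp 1 * n / d) ^ d := by
      rw [← Real.exp_one_pow, ← div_pow, hr]
      field_simp

lemma le_mul_log_of_two_pow_le_exp_mul_div_pow {m d T : ℕ} (hT : 2 ≤ T) (hm : 0 < m)
    (hd : 0 < d) (h : (2 : ℝ) ^ m ≤ (Real.exp 1 * (m * T) / d) ^ d) :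
    (m : ℝ) ≤ 8 * Real.log T * d := by
  have hm' : (0 : ℝ) < m := by exact_mod_cast hm
  have hd' : (0 : ℝ) < d := by exact_mod_cast hd
  have hT' : (2 : ℝ) ≤ T := by exact_mod_cast hT
  have hlog : m * Real.log 2 ≤ d * (1 + Real.log (m / d) + Real.log T) := by
    have := Real.log_le_log (by positivity) h
    rwa [Real.log_pow, Real.log_pow, show Real.exp 1 * (m * T) / d = Real.exp 1 * (m / d) * T by
      ring, Real.log_mul (by positivity) (by positivity), Real.log_mul (by positivity)
      (by positivity), Real.log_exp] at this
  have hlogu : d * Real.log (m / d) ≤ m / Real.exp 1 := by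
    calc d * Real.log (m / d) ≤ d * ((m / d) / Real.exp 1) := by
          gcongr; exact Real.log_le_div_exp_one (by positivity)
      _ = m / Real.exp 1 := by field_simp
  have hlog2 : (0.6931 : ℝ) < Real.log 2 := by linarith [Real.log_two_gt_d9]
  have hlogT : (0.6931 : ℝ) ≤ Real.log T := hlog2.le.trans (Real.log_le_log (by norm_num) hT')
  have hinv_e : m / Real.exp 1 ≤ 0.368 * m := by
    rw [div_le_iff₀ (Real.exp_pos 1)]
    nlinarith [Real.exp_one_gt_d9]
  -- `8 > (1 + 1 / log 2) / (log 2 - 1 / e) ≈ 7.5`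
  nlinarith [mul_le_mul_of_nonneg_left hlog2.le hm'.le, mul_le_mul_of_nonneg_left hlogT hd'.le]

lemma le_mul_log_of_two_pow_le_sum_choose {m d T : ℕ} (hT : 2 ≤ T)
    (h : 2 ^ m ≤ ∑ k ∈ Finset.Iic d, (m * T).choose k) :
    (m : ℝ) ≤ 8 * Real.log T * d := by
  have hlogT : 1 ≤ 8 * Real.log T := by
    have := Real.log_le_log (by norm_num) (show (2 : ℝ) ≤ T by exact_mod_cast hT)
    linarith [Real.log_two_gt_d9]
  rcases le_or_gt (m * T) d with hmTd | hdmT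
  · have hmd : (m : ℝ) ≤ d := by exact_mod_cast (Nat.le_mul_of_pos_right m (by omega)).trans hmTd
    nlinarith
  have hm : 0 < m := Nat.pos_of_mul_pos_right (by omega : 0 < m * T)
  have hd : 0 < d := by
    by_contra! hd0
    obtain rfl : d = 0 := by omega
    rw [← Nat.range_succ_eq_Iic, Finset.sum_range_one, Nat.choose_zero_right] at h
    exact (Nat.one_lt_two_pow hm.ne').not_ge h
  refine le_mul_log_of_two_pow_le_exp_mul_div_pow hT hm hd ?_
  calc (2 : ℝ) ^ m ≤ ∑ k ∈ Finset.Iic d, ((m * T).choose k : ℝ) := by exact_mod_cast h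
    _ ≤ _ := by exact_mod_cast sum_Iic_choose_le_exp_mul_div_pow hdmT.le

/-- for the 0-1 reward class, `VC(R_F) ≤ c · log T · VC(F)`
for a universal constant `c`. -/
theorem vc_reward01_le_log_T_mul_vc :
    ∃ c : ℝ, 0 < c ∧
      ∀ (T : ℕ), 2 ≤ T → ∀ (d : ℕ), 1 ≤ d → ∀ (F : Set (List Bool → Bool)),
        VCdimLe F d →
        ∀ m (zs : Fin m → List Bool × List Bool),
          Shatters (rewardClass01 F T) zs →
          (m : ℝ) ≤ c * Real.log T * d := by
  refine ⟨8, by norm_num, fun T hT d _ F hF m zs hsh => ?_⟩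
  refine le_mul_log_of_two_pow_le_sum_choose hT ?_
  calc 2 ^ m ≤ ((· ∘ prefixQueries zs T) '' F).ncard := two_pow_le_ncard_traces_prefixQueries hsh
    _ ≤ ∑ k ∈ Finset.Iic d, (Fintype.card (Fin m × Fin T)).choose k :=
      ncard_image_comp_le_sum_choose hF _
    _ = ∑ k ∈ Finset.Iic d, (m * T).choose k := by simp
end

section
/- In the BoN bound with binary rewards (σ = 1, |δ(x,y)| = 1{r̂(x,y) ≠ r(x,y)}), if the verifier's misclassification error E_{x,y∼P_x×π₀}1{r̂(x,y)≠r(x,y)} ≤ ε and P₀(x) ≥ α > 0 for all x, then choosing N = −log(n)/log(1−α) gives expected BoN reward at least 1 − [ (log n / (−log(1−α))) · ε + 1/n ]. -/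
/-!
A best-of-`N` draw can return a wrong response only if the verifier `r̂` misjudges one of the
`N` samples, or none of the samples is correct: if `r̂` agrees with `r` on every sample and some
sample is correct, then the `r̂`-best sample is correct. A union bound over the samples bounds the
failure probability at prompt `x` by `N · E[1{r̂ ≠ r}] + (1 - P₀(x)) ^ N`; averaging over `x`
and using `(1 - α) ^ N = 1 / n` gives the theorem.
-/

open Finset

section ProductWeights

variable {ι Y : Type*} [Fintype ι] [DecidableEq ι] [Fintype Y] {p : Y → ℝ}

theorem sum_prod_eq_one (hp : ∑ y, p y = 1) : ∑ ys : ι → Y, ∏ j, p (ys j) = 1 := by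
  rw [← Fintype.prod_sum]
  simp [hp]

theorem sum_prod_mul_prod_eq_pow (g : Y → ℝ) :
    ∑ ys : ι → Y, (∏ j, p (ys j)) * ∏ j, g (ys j) = (∑ y, p y * g y) ^ Fintype.card ι := by
  simp_rw [← prod_mul_distrib]
  rw [← Fintype.prod_sum (fun _ y => p y * g y), prod_const, card_univ]

theorem sum_prod_mul_apply_eq (hp : ∑ y, p y = 1) (f : Y → ℝ) (j : ι) :
    ∑ ys : ι → Y, (∏ i, p (ys i)) * f (ys j) = ∑ y, p y * f y := by
  calc ∑ ys : ι → Y, (∏ i, p (ys i)) * f (ys j)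
      = ∑ ys : ι → Y, ∏ i, p (ys i) * (if i = j then f (ys i) else 1) := by
        simp_rw [prod_mul_distrib, Fintype.prod_ite_eq']
    _ = ∏ i, ∑ y, p y * (if i = j then f y else 1) :=
        (Fintype.prod_sum fun i y => p y * (if i = j then f y else 1)).symm
    _ = ∑ y, p y * f y := by
        rw [← Fintype.prod_ite_eq' j (fun _ => ∑ y, p y * f y)]
        refine prod_congr rfl fun i _ => ?_
        split_ifs <;> simp [hp]

theorem sum_prod_mul_sum_eq (hp : ∑ y, p y = 1) (f : Y → ℝ) :
    ∑ ys : ι → Y, (∏ i, p (ys i)) * ∑ j, f (ys j) = Fintype.card ι * ∑ y, p y * f y := by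
  simp_rw [mul_sum]
  rw [sum_comm]
  simp [sum_prod_mul_apply_eq hp, mul_sum]

end ProductWeights

section BestOfN

variable {ι Y : Type*} [Fintype ι] {r rhat : Y → Bool}

theorem exists_ne_or_forall_eq_false_of_best {ys : ι → Y} {y₀ : Y} (hmem : ∃ j, y₀ = ys j)
    (hbest : (∃ j, rhat (ys j) = true) → rhat y₀ = true) (hr : r y₀ = false) :
    (∃ j, rhat (ys j) ≠ r (ys j)) ∨ ∀ j, r (ys j) = false := by
  by_contra! h
  obtain ⟨hagree, j, hj⟩ := h
  have hbest_true := hbest ⟨j, by simpa [hagree] using hj⟩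
  obtain ⟨j₀, rfl⟩ := hmem
  rw [hagree, hr] at hbest_true
  exact Bool.false_ne_true hbest_true

theorem one_sub_ite_le_sum_add_prod {ys : ι → Y} {y₀ : Y} (hmem : ∃ j, y₀ = ys j)
    (hbest : (∃ j, rhat (ys j) = true) → rhat y₀ = true) :
    1 - (if r y₀ then (1 : ℝ) else 0) ≤
      ∑ j, (if rhat (ys j) ≠ r (ys j) then (1 : ℝ) else 0) +
        ∏ j, (1 - if r (ys j) then (1 : ℝ) else 0) := by
  have hsum : 0 ≤ ∑ j, (if rhat (ys j) ≠ r (ys j) then (1 : ℝ) else 0) :=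
    sum_nonneg fun j _ => by split_ifs <;> norm_num
  have hprod : 0 ≤ ∏ j, (1 - if r (ys j) then (1 : ℝ) else 0) :=
    prod_nonneg fun j _ => by split_ifs <;> norm_num
  cases hr : r y₀
  · rcases exists_ne_or_forall_eq_false_of_best hmem hbest hr with ⟨j, hj⟩ | hall
    · have hone : (1 : ℝ) ≤ ∑ j, (if rhat (ys j) ≠ r (ys j) then (1 : ℝ) else 0) := by
        simpa [hj] using single_le_sum (f := fun j => if rhat (ys j) ≠ r (ys j) then (1 : ℝ) else 0)
          (fun j _ => by split_ifs <;> norm_num) (mem_univ j)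
      simp only [Bool.false_eq_true, if_false, sub_zero]
      linarith
    · simp [hall]
  · rw [if_pos rfl, sub_self]
    linarith

variable [DecidableEq ι] [Fintype Y] {p : Y → ℝ}

theorem sum_mul_ite_le_one (hp0 : ∀ y, 0 ≤ p y) (hp1 : ∑ y, p y = 1) :
    ∑ y, p y * (if r y then (1 : ℝ) else 0) ≤ 1 :=
  (sum_le_sum fun y _ => mul_le_of_le_one_right (hp0 y) (by split_ifs <;> norm_num)).trans hp1.le

theorem one_sub_le_sum_prod_mul_ite_best (hp0 : ∀ y, 0 ≤ p y) (hp1 : ∑ y, p y = 1)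
    (sel : (ι → Y) → Y)
    (hsel : ∀ ys, (∃ j, sel ys = ys j) ∧ ((∃ j, rhat (ys j) = true) → rhat (sel ys) = true)) :
    1 - (Fintype.card ι * ∑ y, p y * (if rhat y ≠ r y then (1 : ℝ) else 0) +
        (1 - ∑ y, p y * (if r y then (1 : ℝ) else 0)) ^ Fintype.card ι) ≤
      ∑ ys : ι → Y, (∏ j, p (ys j)) * (if r (sel ys) then (1 : ℝ) else 0) := by
  have hfail : ∑ ys : ι → Y, (∏ j, p (ys j)) * (1 - if r (sel ys) then (1 : ℝ) else 0) ≤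
      Fintype.card ι * ∑ y, p y * (if rhat y ≠ r y then (1 : ℝ) else 0) +
        (1 - ∑ y, p y * (if r y then (1 : ℝ) else 0)) ^ Fintype.card ι :=
    calc _ ≤ ∑ ys : ι → Y, (∏ j, p (ys j)) *
            (∑ j, (if rhat (ys j) ≠ r (ys j) then (1 : ℝ) else 0) +
              ∏ j, (1 - if r (ys j) then (1 : ℝ) else 0)) :=
          sum_le_sum fun ys _ => mul_le_mul_of_nonneg_left
            (one_sub_ite_le_sum_add_prod (hsel ys).1 (hsel ys).2)
            (prod_nonneg fun j _ => hp0 (ys j))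
      _ = _ := by
          simp_rw [mul_add]
          rw [sum_add_distrib, sum_prod_mul_sum_eq hp1 fun y => if rhat y ≠ r y then (1 : ℝ) else 0,
            sum_prod_mul_prod_eq_pow fun y => 1 - if r y then (1 : ℝ) else 0]
          simp only [mul_sub, mul_one, sum_sub_distrib, hp1]
  have hsuccess : ∑ ys : ι → Y, (∏ j, p (ys j)) * (1 - if r (sel ys) then (1 : ℝ) else 0) =
      1 - ∑ ys : ι → Y, (∏ j, p (ys j)) * (if r (sel ys) then (1 : ℝ) else 0) := by
    simp only [mul_sub, mul_one, sum_sub_distrib, sum_prod_eq_one hp1]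
  linarith

end BestOfN

theorem one_sub_le_sum_mul_of_le {X : Type*} [Fintype X] {w s e c : X → ℝ} {ε α : ℝ} {N : ℕ}
    (hw0 : ∀ x, 0 ≤ w x) (hw1 : ∑ x, w x = 1)
    (hs : ∀ x, 1 - (N * e x + (1 - c x) ^ N) ≤ s x) (hαc : ∀ x, α ≤ c x) (hc1 : ∀ x, c x ≤ 1)
    (he : ∑ x, w x * e x ≤ ε) :
    1 - (N * ε + (1 - α) ^ N) ≤ ∑ x, w x * s x := by
  have hpow : ∑ x, w x * (1 - c x) ^ N ≤ (1 - α) ^ N :=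
    calc _ ≤ ∑ x, w x * (1 - α) ^ N :=
          sum_le_sum fun x _ => mul_le_mul_of_nonneg_left
            (pow_le_pow_left₀ (by linarith [hc1 x]) (by linarith [hαc x]) N) (hw0 x)
      _ = (1 - α) ^ N := by rw [← sum_mul, hw1, one_mul]
  have hNe : (N : ℝ) * ∑ x, w x * e x ≤ N * ε := mul_le_mul_of_nonneg_left he N.cast_nonneg
  have hexpand : ∑ x, w x * (1 - (N * e x + (1 - c x) ^ N)) =
      1 - (N * ∑ x, w x * e x + ∑ x, w x * (1 - c x) ^ N) := by
    simp only [mul_sub, mul_add, mul_one, sum_sub_distrib, sum_add_distrib, hw1, mul_sum]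
    simp only [mul_left_comm]
  calc 1 - (N * ε + (1 - α) ^ N) ≤ ∑ x, w x * (1 - (N * e x + (1 - c x) ^ N)) := by
        linarith
    _ ≤ ∑ x, w x * s x := sum_le_sum fun x _ => mul_le_mul_of_nonneg_left (hs x) (hw0 x)

theorem one_sub_pow_eq_one_div_of_cast_eq {α : ℝ} {n N : ℕ} (hα0 : 0 < α) (hα1 : α < 1)
    (hn : 1 ≤ n) (hN : (N : ℝ) = -Real.log n / Real.log (1 - α)) :
    (1 - α) ^ N = 1 / n := by
  rw [← Real.rpow_natCast, Real.rpow_def_of_pos (by linarith), hN, mul_comm,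
    div_mul_cancel₀ _ (Real.log_neg (by linarith) (by linarith)).ne, Real.exp_neg,
    Real.exp_log (Nat.cast_pos.mpr hn), one_div]

open Classical in
theorem best_of_n_binary_bound_general
    {X Y : Type*} [Fintype X] [Fintype Y]
    (Px : X → ℝ) (hPx0 : ∀ x, 0 ≤ Px x) (hPx1 : ∑ x, Px x = 1)
    (π₀ : X → Y → ℝ) (hπ0 : ∀ x y, 0 ≤ π₀ x y) (hπ1 : ∀ x, ∑ y, π₀ x y = 1)
    (r rhat : X → Y → Bool)
    (ε α : ℝ) (hα0 : 0 < α) (hα1 : α < 1)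
    (herr : ∑ x, ∑ y, Px x * π₀ x y * (if rhat x y ≠ r x y then (1 : ℝ) else 0) ≤ ε)
    (hcov : ∀ x, α ≤ ∑ y, π₀ x y * (if r x y then (1 : ℝ) else 0))
    (n N : ℕ) (hn : 1 ≤ n)
    (hN : (N : ℝ) = -Real.log n / Real.log (1 - α))
    (sel : X → (Fin N → Y) → Y)
    (hsel : ∀ x ys, (∃ j, sel x ys = ys j) ∧
      ((∃ j, rhat x (ys j) = true) → rhat x (sel x ys) = true)) :
    ∑ x, Px x * ∑ ys : Fin N → Y, (∏ j, π₀ x (ys j)) *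
        (if r x (sel x ys) then (1 : ℝ) else 0) ≥
      1 - ((Real.log n / (-Real.log (1 - α))) * ε + 1 / n) := by
  have hcoef : Real.log n / -Real.log (1 - α) = N := by rw [hN, div_neg, neg_div]
  rw [ge_iff_le, hcoef, ← one_sub_pow_eq_one_div_of_cast_eq hα0 hα1 hn hN]
  have herr' : ∑ x, Px x * ∑ y, π₀ x y * (if rhat x y ≠ r x y then (1 : ℝ) else 0) ≤ ε := by
    simpa only [mul_sum, mul_assoc] using herr
  refine one_sub_le_sum_mul_of_le hPx0 hPx1 (fun x => ?_) hcov
    (fun x => sum_mul_ite_le_one (hπ0 x) (hπ1 x)) herr'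
  simpa using one_sub_le_sum_prod_mul_ite_best (hπ0 x) (hπ1 x) (sel x) (hsel x)

open Classical in
/-- BoN bound with binary rewards. If the verifier's misclassification
error is at most `ε`, the per-prompt coverage is at least `α > 0`, and
`N = −log(n)/log(1−α)`, then the expected BoN reward is at least
`1 − [(log n / (−log(1−α)))·ε + 1/n]`. -/
theorem best_of_n_binary_bound
    {X Y : Type*} [Fintype X] [Fintype Y] [Nonempty Y]
    (Px : X → ℝ) (hPx0 : ∀ x, 0 ≤ Px x) (hPx1 : ∑ x, Px x = 1)
    (π₀ : X → Y → ℝ) (hπ0 : ∀ x y, 0 ≤ π₀ x y) (hπ1 : ∀ x, ∑ y, π₀ x y = 1)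
    (r rhat : X → Y → Bool)
    (ε α : ℝ) (hα0 : 0 < α) (hα1 : α < 1)
    (herr : ∑ x, ∑ y, Px x * π₀ x y * (if rhat x y ≠ r x y then (1 : ℝ) else 0) ≤ ε)
    (hcov : ∀ x, α ≤ ∑ y, π₀ x y * (if r x y then (1 : ℝ) else 0))
    (n N : ℕ) (hn : 1 ≤ n)
    (hN : (N : ℝ) = -Real.log n / Real.log (1 - α))
    (sel : X → (Fin N → Y) → Y)
    (hsel : ∀ x ys, (∃ j, sel x ys = ys j) ∧
      ((∃ j, rhat x (ys j) = true) → rhat x (sel x ys) = true)) :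
    ∑ x, Px x * ∑ ys : Fin N → Y, (∏ j, π₀ x (ys j)) *
        (if r x (sel x ys) then (1 : ℝ) else 0) ≥
      1 - ((Real.log n / (-Real.log (1 - α))) * ε + 1 / n) :=
  best_of_n_binary_bound_general Px hPx0 hPx1 π₀ hπ0 hπ1 r rhat ε α hα0 hα1 herr hcov n N hn hN sel
    hsel
end
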